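/- arXiv:1607.03445 — 3 statements merged into one kernel-verified Lean document; each statement's English description precedes it below -/
import Mathlib

section
/- Observational equivalence of stores with respect to an observer o is reflexive and symmetric, but in general not transitive: there exist a policy assignment, observer, and stores σ1, σ2, σ3 with σ1 ~_o σ2 and σ2 ~_o σ3 but not σ1 ~_o σ3. -/
/-- o-equivalence of stores. -/
def OEquiv {Loc Val User : Type*}
    (out : (Loc → Val) → User → List Val)
    (pol : Loc → (Loc → Val) → User → Prop)
    (o : User) (σ1 σ2 : Loc → Val) : Prop :=
  out σ1 o = out σ2 o ∧ ∀ l, (pol l σ1 o ∨ pol l σ2 o) → σ1 l = σ2 l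

/-- Observational equivalence is reflexive and symmetric, but in general
not transitive. -/
theorem oequiv_refl_symm_not_trans :
    (∀ (Loc Val User : Type)
       (out : (Loc → Val) → User → List Val)
       (pol : Loc → (Loc → Val) → User → Prop) (o : User),
       (∀ σ, OEquiv out pol o σ σ) ∧
       (∀ σ1 σ2, OEquiv out pol o σ1 σ2 → OEquiv out pol o σ2 σ1)) ∧
    (∃ (Loc Val User : Type)
       (out : (Loc → Val) → User → List Val)
       (pol : Loc → (Loc → Val) → User → Prop) (o : User)
       (σ1 σ2 σ3 : Loc → Val),
       OEquiv out pol o σ1 σ2 ∧ OEquiv out pol o σ2 σ3 ∧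
       ¬ OEquiv out pol o σ1 σ3) := by
  constructor
  · intro Loc Val User out pol o
    constructor
    · intro σ
      exact ⟨rfl, fun l _ => rfl⟩
    · rintro σ1 σ2 ⟨h1, h2⟩
      exact ⟨h1.symm, fun l hl => (h2 l hl.symm).symm⟩
  · refine ⟨Bool, ℕ, Unit, fun _ _ => [],
      fun l σ _ => l = true ∧ σ false = 0, (),
      fun l => if l then 0 else 1, fun _ => 1, fun l => if l then 1 else 0,
      ⟨rfl, ?_⟩, ⟨rfl, ?_⟩, ?_⟩
    · rintro l (⟨rfl, h⟩ | ⟨rfl, h⟩) <;> simp_all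
    · rintro l (⟨rfl, h⟩ | ⟨rfl, h⟩) <;> simp_all
    · rintro ⟨-, h⟩
      have := h true (Or.inr ⟨rfl, rfl⟩)
      simp at this
end

section
/- If every location's policy is store-independent (pol l σ u does not depend on σ), then o-equivalence of stores is an equivalence relation (reflexive, symmetric, and transitive). -/
/-- If every location's policy is store-independent, then o-equivalence is
an equivalence relation. -/
theorem oequiv_equivalence_of_store_independent
    {Loc Val User : Type*}
    (out : (Loc → Val) → User → List Val)
    (pol : Loc → (Loc → Val) → User → Prop)
    (hind : ∀ l σ σ' u, pol l σ u ↔ pol l σ' u)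
    (o : User) :
    (∀ σ, OEquiv out pol o σ σ) ∧
    (∀ σ1 σ2, OEquiv out pol o σ1 σ2 → OEquiv out pol o σ2 σ1) ∧
    (∀ σ1 σ2 σ3, OEquiv out pol o σ1 σ2 → OEquiv out pol o σ2 σ3 →
      OEquiv out pol o σ1 σ3) := by
  refine ⟨fun σ => ⟨rfl, fun l _ => rfl⟩,
    fun σ1 σ2 ⟨h1, h2⟩ => ⟨h1.symm, fun l hl => (h2 l hl.symm).symm⟩,
    fun σ1 σ2 σ3 ⟨h1, h2⟩ ⟨h3, h4⟩ =>
      ⟨h1.trans h3, fun l hl => ?_⟩⟩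
  have hp : pol l σ2 o ∨ pol l σ2 o := by
    rcases hl with h | h
    · exact Or.inl ((hind l σ1 σ2 o).mp h)
    · exact Or.inl ((hind l σ3 σ2 o).mp h)
  exact (h2 l (Or.inr (hp.elim id id))).trans (h4 l (Or.inl (hp.elim id id)))
end

section
/- Filter-based implicit flow safety: let visible : PaperId → Prop and status : PaperId → Status with a patched status reader status' p = if visible p then status p else NoDecision. If two status assignments status₁, status₂ agree on all visible papers (∀ p, visible p → status₁ p = status₂ p), then the filtered lists List.filter (λ p, decide (status'₁ p = Accept)) ps and List.filter (λ p, decide (status'₂ p = Accept)) ps are equal for every list ps, where status'ᵢ uses statusᵢ. -/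
/-- Filter-based implicit flow safety: filtering by the patched status reader
cannot leak hidden statuses, since the patch replaces hidden statuses by the
constant `NoDecision ≠ Accept`. -/
theorem filter_patched_status_noninterference
    {PaperId Status : Type*} [DecidableEq Status]
    (Accept NoDecision : Status) (hne : NoDecision ≠ Accept)
    (visible : PaperId → Prop) [DecidablePred visible]
    (status₁ status₂ : PaperId → Status)
    (hagree : ∀ p, visible p → status₁ p = status₂ p) :
    ∀ ps : List PaperId,
      ps.filter (fun p => decide ((if visible p then status₁ p else NoDecision) = Accept)) =
      ps.filter (fun p => decide ((if visible p then status₂ p else NoDecision) = Accept)) := by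
  intro ps
  apply List.filter_congr
  intro p _
  by_cases h : visible p
  · simp [h, hagree p h]
  · simp [h]
end
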